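/- arXiv:1705.03117 — 3 statements merged into one kernel-verified Lean document; each statement's English description precedes it below -/
import Mathlib

section
/- Fix an integer g ≥ 0. The admissible Hodge diamonds for weight n = 1 and Hodge numbers h^{1,0} = h^{0,1} = g are exactly the g+1 functions f_a (0 ≤ a ≤ g) defined by f_a(0,0) = f_a(1,1) = a, f_a(1,0) = f_a(0,1) = g − a, and f_a(p,q) = 0 for all other (p,q). In particular there are exactly g+1 admissible Hodge diamonds. -/
/-- `f : ℤ×ℤ → ℕ` is an admissible Hodge diamond for weight `n` and Hodge numbers
`h : ℤ → ℕ` (extended by `0` outside `[0,n]`):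
(a) every row of `f` is finitely supported and sums to the corresponding Hodge number;
(b) `f(p,q) = f(q,p) = f(n−q,n−p)`;
(c) `f(p−1,q−1) ≤ f(p,q)` whenever `p+q ≤ n`. -/
def AdmissibleDiamond (n : ℤ) (h : ℤ → ℕ) (f : ℤ → ℤ → ℕ) : Prop :=
  (∀ p : ℤ, ∃ s : Finset ℤ, (∀ q : ℤ, f p q ≠ 0 → q ∈ s) ∧ ∑ q ∈ s, f p q = h p) ∧
  (∀ p q : ℤ, f p q = f q p) ∧
  (∀ p q : ℤ, f p q = f (n - q) (n - p)) ∧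
  (∀ p q : ℤ, p + q ≤ n → f (p - 1) (q - 1) ≤ f p q)

/-- The candidate diamonds `f_a` for weight `1` and Hodge numbers `h^{1,0} = h^{0,1} = g`:
`f_a(0,0) = f_a(1,1) = a`, `f_a(1,0) = f_a(0,1) = g − a`, and `0` elsewhere. -/
def genusgDiamond (g a : ℕ) : ℤ → ℤ → ℕ := fun p q =>
  if (p = 0 ∧ q = 0) ∨ (p = 1 ∧ q = 1) then a
  else if (p = 1 ∧ q = 0) ∨ (p = 0 ∧ q = 1) then g - a
  else 0

/-- **Classification of admissible Hodge diamonds for weight 1, Hodge numbers `(g,g)`.**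
The admissible Hodge diamonds are exactly the `g+1` functions `f_a`, `0 ≤ a ≤ g`; in
particular (the `f_a` being pairwise distinct) there are exactly `g+1` of them. -/
theorem stmt9 (g : ℕ) :
    (∀ f : ℤ → ℤ → ℕ,
        AdmissibleDiamond 1 (fun p => if p = 0 ∨ p = 1 then g else 0) f ↔
          ∃ a : ℕ, a ≤ g ∧ f = genusgDiamond g a) ∧
    (∀ a b : ℕ, a ≤ g → b ≤ g → genusgDiamond g a = genusgDiamond g b → a = b) := by
  constructor
  · intro f
    constructor
    · rintro ⟨hrowsum, hsymm, hdual, -⟩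
      have hzero : ∀ p : ℤ, ¬(p = 0 ∨ p = 1) → ∀ q, f p q = 0 := by
        intro p hp q
        obtain ⟨s, hs, hsum⟩ := hrowsum p
        simp only [if_neg hp] at hsum
        by_cases hq : q ∈ s
        · exact (Finset.sum_eq_zero_iff.mp hsum) q hq
        · by_contra h; exact hq (hs q h)
      have hrow : f 0 0 + f 0 1 = g := by
        obtain ⟨s, hs, hsum⟩ := hrowsum 0
        norm_num at hsum
        have h1 : ∑ q ∈ s ∪ {0, 1}, f 0 q = g := by
          rw [← hsum]
          exact (Finset.sum_subset Finset.subset_union_left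
            (fun x _ hx => by by_contra h; exact hx (hs x h))).symm
        have h2 : ∑ q ∈ ({0, 1} : Finset ℤ), f 0 q = ∑ q ∈ s ∪ {0, 1}, f 0 q := by
          apply Finset.sum_subset Finset.subset_union_right
          intro x _ hx
          simp only [Finset.mem_insert, Finset.mem_singleton] at hx
          rw [hsymm]
          exact hzero x (by push_neg at hx ⊢; exact hx) 0
        rw [h1] at h2
        rwa [Finset.sum_pair (by norm_num : (0:ℤ) ≠ 1)] at h2
      have h11 : f 1 1 = f 0 0 := by have := hdual 1 1; norm_num at this; exact this
      have h10 : f 1 0 = f 0 1 := hsymm 1 0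
      refine ⟨f 0 0, by omega, ?_⟩
      funext p q
      unfold genusgDiamond
      split_ifs with h1 h2
      · rcases h1 with ⟨hp, hq⟩ | ⟨hp, hq⟩
        · subst hp; subst hq; rfl
        · subst hp; subst hq; exact h11
      · rcases h2 with ⟨hp, hq⟩ | ⟨hp, hq⟩
        · subst hp; subst hq; omega
        · subst hp; subst hq; omega
      · by_cases hp : p = 0 ∨ p = 1
        · by_cases hq : q = 0 ∨ q = 1
          · exfalso
            rcases hp with hp | hp <;> rcases hq with hq | hq <;>
              subst hp <;> subst hq <;> simp at h1 h2
          · rw [hsymm]; exact hzero q hq p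
        · exact hzero p hp q
    · rintro ⟨a, ha, rfl⟩
      refine ⟨?_, ?_, ?_, ?_⟩
      · intro p
        refine ⟨{0, 1}, ?_, ?_⟩
        · intro q hq
          simp only [Finset.mem_insert, Finset.mem_singleton]
          by_contra hq'
          push_neg at hq'
          apply hq
          simp [genusgDiamond, hq'.1, hq'.2]
        · rw [Finset.sum_pair (by norm_num : (0:ℤ) ≠ 1)]
          by_cases hp0 : p = 0
          · subst hp0; simp [genusgDiamond]; omega
          · by_cases hp1 : p = 1
            · subst hp1; simp [genusgDiamond]; omega
            · simp [genusgDiamond, hp0, hp1]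
      · intro p q; unfold genusgDiamond; split_ifs <;> omega
      · intro p q; unfold genusgDiamond; split_ifs <;> omega
      · intro p q hpq; unfold genusgDiamond; split_ifs <;> omega
  · intro a b ha hb h
    have := congrFun (congrFun h 0) 0
    simpa [genusgDiamond] using this
end

section
/- Fix an integer m ≥ 2. There are exactly 3 admissible Hodge diamonds for weight n = 2 and Hodge numbers h^{2,0} = h^{0,2} = 1, h^{1,1} = m: namely the function supported at (0,2),(1,1),(2,0) with values 1,m,1; the function supported at (0,1),(1,0),(1,1),(1,2),(2,1) with values 1,1,m−2,1,1; and the function supported at (0,0),(1,1),(2,2) with values 1,m,1. -/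
/-- Type `0` for `(1,m,1)`: pure Hodge structure, supported at `(0,2),(1,1),(2,0)` with
values `1, m, 1`. -/
def K3Diamond0 (m : ℕ) : ℤ → ℤ → ℕ := fun p q =>
  if (p = 0 ∧ q = 2) ∨ (p = 2 ∧ q = 0) then 1
  else if p = 1 ∧ q = 1 then m
  else 0

/-- Type `I` for `(1,m,1)`: supported at `(0,1),(1,0),(1,2),(2,1)` with value `1` and at
`(1,1)` with value `m − 2`. -/
def K3DiamondI (m : ℕ) : ℤ → ℤ → ℕ := fun p q =>
  if (p = 0 ∧ q = 1) ∨ (p = 1 ∧ q = 0) ∨ (p = 1 ∧ q = 2) ∨ (p = 2 ∧ q = 1) then 1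
  else if p = 1 ∧ q = 1 then m - 2
  else 0

/-- Type `II` for `(1,m,1)`: supported at `(0,0),(1,1),(2,2)` with values `1, m, 1`. -/
def K3DiamondII (m : ℕ) : ℤ → ℤ → ℕ := fun p q =>
  if (p = 0 ∧ q = 0) ∨ (p = 2 ∧ q = 2) then 1
  else if p = 1 ∧ q = 1 then m
  else 0

/-- Any entry of a row is at most the row sum. -/
lemma k3_row_bound {h : ℤ → ℕ} {f : ℤ → ℤ → ℕ}
    (ha : ∀ p : ℤ, ∃ s : Finset ℤ, (∀ q : ℤ, f p q ≠ 0 → q ∈ s) ∧ ∑ q ∈ s, f p q = h p)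
    (p q : ℤ) : f p q ≤ h p := by
  obtain ⟨s, hs, hsum⟩ := ha p
  by_cases hq : f p q = 0
  · omega
  · calc f p q ≤ ∑ q' ∈ s, f p q' :=
        Finset.single_le_sum (fun _ _ => Nat.zero_le _) (hs q hq)
    _ = h p := hsum

/-- If a row vanishes outside `{0,1,2}`, its sum is the sum of the three entries. -/
lemma k3_row_sum {h : ℤ → ℕ} {f : ℤ → ℤ → ℕ}
    (ha : ∀ p : ℤ, ∃ s : Finset ℤ, (∀ q : ℤ, f p q ≠ 0 → q ∈ s) ∧ ∑ q ∈ s, f p q = h p)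
    (p : ℤ) (hz : ∀ q : ℤ, q ≠ 0 → q ≠ 1 → q ≠ 2 → f p q = 0) :
    f p 0 + f p 1 + f p 2 = h p := by
  obtain ⟨s, hs, hsum⟩ := ha p
  have e1 : ∑ q ∈ s, f p q = ∑ q ∈ s ∪ {0,1,2}, f p q :=
    Finset.sum_subset Finset.subset_union_left (fun x _ hx => by
      by_contra hne; exact hx (hs x hne))
  have e2 : ∑ q ∈ ({0,1,2} : Finset ℤ), f p q = ∑ q ∈ s ∪ {0,1,2}, f p q :=
    Finset.sum_subset Finset.subset_union_right (fun x _ hx => by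
      simp only [Finset.mem_insert, Finset.mem_singleton] at hx
      push_neg at hx
      exact hz x hx.1 hx.2.1 hx.2.2)
  have e3 : ∑ q ∈ ({0,1,2} : Finset ℤ), f p q = f p 0 + f p 1 + f p 2 := by
    rw [show ({0,1,2} : Finset ℤ) = insert 0 (insert 1 {2}) from rfl,
      Finset.sum_insert (by decide), Finset.sum_insert (by decide), Finset.sum_singleton]
    ring
  omega

lemma k3_adm0 (m : ℕ) :
    AdmissibleDiamond 2 (fun p => if p = 0 ∨ p = 2 then 1 else if p = 1 then m else 0)
      (K3Diamond0 m) := by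
  refine ⟨fun p => ⟨{0,1,2}, fun q hq => ?_, ?_⟩, fun p q => ?_, fun p q => ?_,
    fun p q hpq => ?_⟩
  · simp only [K3Diamond0] at hq
    simp only [Finset.mem_insert, Finset.mem_singleton]
    split_ifs at hq with h1 h2 <;> omega
  · rw [show ({0,1,2} : Finset ℤ) = insert 0 (insert 1 {2}) from rfl,
      Finset.sum_insert (by decide), Finset.sum_insert (by decide), Finset.sum_singleton]
    simp only [K3Diamond0]
    norm_num
    split_ifs <;> omega
  · simp only [K3Diamond0]; split_ifs <;> omega
  · simp only [K3Diamond0]; split_ifs <;> omega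
  · simp only [K3Diamond0]; split_ifs <;> omega

lemma k3_admI (m : ℕ) (hm : 2 ≤ m) :
    AdmissibleDiamond 2 (fun p => if p = 0 ∨ p = 2 then 1 else if p = 1 then m else 0)
      (K3DiamondI m) := by
  refine ⟨fun p => ⟨{0,1,2}, fun q hq => ?_, ?_⟩, fun p q => ?_, fun p q => ?_,
    fun p q hpq => ?_⟩
  · simp only [K3DiamondI] at hq
    simp only [Finset.mem_insert, Finset.mem_singleton]
    split_ifs at hq with h1 h2 <;> omega
  · rw [show ({0,1,2} : Finset ℤ) = insert 0 (insert 1 {2}) from rfl,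
      Finset.sum_insert (by decide), Finset.sum_insert (by decide), Finset.sum_singleton]
    simp only [K3DiamondI]
    norm_num
    split_ifs <;> omega
  · simp only [K3DiamondI]; split_ifs <;> omega
  · simp only [K3DiamondI]; split_ifs <;> omega
  · simp only [K3DiamondI]; split_ifs <;> omega

lemma k3_admII (m : ℕ) (hm : 2 ≤ m) :
    AdmissibleDiamond 2 (fun p => if p = 0 ∨ p = 2 then 1 else if p = 1 then m else 0)
      (K3DiamondII m) := by
  refine ⟨fun p => ⟨{0,1,2}, fun q hq => ?_, ?_⟩, fun p q => ?_, fun p q => ?_,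
    fun p q hpq => ?_⟩
  · simp only [K3DiamondII] at hq
    simp only [Finset.mem_insert, Finset.mem_singleton]
    split_ifs at hq with h1 h2 <;> omega
  · rw [show ({0,1,2} : Finset ℤ) = insert 0 (insert 1 {2}) from rfl,
      Finset.sum_insert (by decide), Finset.sum_insert (by decide), Finset.sum_singleton]
    simp only [K3DiamondII]
    norm_num
    split_ifs <;> omega
  · simp only [K3DiamondII]; split_ifs <;> omega
  · simp only [K3DiamondII]; split_ifs <;> omega
  · simp only [K3DiamondII]; split_ifs <;> omega

/-- **Classification of admissible Hodge diamonds for weight 2, Hodge numbers `(1,m,1)`,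
`m ≥ 2`.**  There are exactly three admissible Hodge diamonds, namely the types `0`, `I`,
`II` described above (which are pairwise distinct). -/
theorem stmt10 (m : ℕ) (hm : 2 ≤ m) :
    (∀ f : ℤ → ℤ → ℕ,
        AdmissibleDiamond 2
            (fun p => if p = 0 ∨ p = 2 then 1 else if p = 1 then m else 0) f ↔
          f = K3Diamond0 m ∨ f = K3DiamondI m ∨ f = K3DiamondII m) ∧
    K3Diamond0 m ≠ K3DiamondI m ∧ K3Diamond0 m ≠ K3DiamondII m ∧
      K3DiamondI m ≠ K3DiamondII m := by
  set h : ℤ → ℕ := fun p => if p = 0 ∨ p = 2 then 1 else if p = 1 then m else 0 with hh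
  refine ⟨fun f => ⟨fun hf => ?_, ?_⟩, ?_, ?_, ?_⟩
  · -- forward direction
    obtain ⟨ha, hb, hc, hd⟩ := hf
    -- rows outside {0,1,2} vanish
    have hPout : ∀ p : ℤ, p ≠ 0 → p ≠ 1 → p ≠ 2 → ∀ q : ℤ, f p q = 0 := by
      intro p h0 h1 h2 q
      have := k3_row_bound ha p q
      simp only [hh] at this
      split_ifs at this <;> omega
    have hQout : ∀ p q : ℤ, q ≠ 0 → q ≠ 1 → q ≠ 2 → f p q = 0 := by
      intro p q h0 h1 h2
      rw [hb]
      exact hPout q h0 h1 h2 p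
    -- the three row sums
    have r0 : f 0 0 + f 0 1 + f 0 2 = 1 := by
      have := k3_row_sum ha 0 (hQout 0); simpa [hh] using this
    have r1 : f 1 0 + f 1 1 + f 1 2 = m := by
      have := k3_row_sum ha 1 (hQout 1); simpa [hh] using this
    have r2 : f 2 0 + f 2 1 + f 2 2 = 1 := by
      have := k3_row_sum ha 2 (hQout 2); simpa [hh] using this
    -- symmetries
    have s01 : f 0 1 = f 1 0 := hb 0 1
    have s02 : f 0 2 = f 2 0 := hb 0 2
    have s12 : f 1 2 = f 2 1 := hb 1 2
    have t00 : f 0 0 = f 2 2 := by have := hc 0 0; norm_num at this; exact this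
    have t01 : f 0 1 = f 1 2 := by have := hc 0 1; norm_num at this; exact this
    -- case split on row 0
    have hcase : (f 0 2 = 1 ∧ f 0 0 = 0 ∧ f 0 1 = 0) ∨
        (f 0 1 = 1 ∧ f 0 0 = 0 ∧ f 0 2 = 0) ∨
        (f 0 0 = 1 ∧ f 0 1 = 0 ∧ f 0 2 = 0) := by omega
    rcases hcase with hco | hco | hco
    · left
      funext p q
      by_cases hp : p = 0 ∨ p = 1 ∨ p = 2
      · by_cases hq : q = 0 ∨ q = 1 ∨ q = 2
        · rcases hp with rfl | rfl | rfl <;> rcases hq with rfl | rfl | rfl <;>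
            simp only [K3Diamond0] <;> norm_num <;> omega
        · push_neg at hq
          rw [hQout p q hq.1 hq.2.1 hq.2.2]
          simp only [K3Diamond0]; split_ifs <;> omega
      · push_neg at hp
        rw [hPout p hp.1 hp.2.1 hp.2.2 q]
        simp only [K3Diamond0]; split_ifs <;> omega
    · right; left
      funext p q
      by_cases hp : p = 0 ∨ p = 1 ∨ p = 2
      · by_cases hq : q = 0 ∨ q = 1 ∨ q = 2
        · rcases hp with rfl | rfl | rfl <;> rcases hq with rfl | rfl | rfl <;>
            simp only [K3DiamondI] <;> norm_num <;> omega
        · push_neg at hq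
          rw [hQout p q hq.1 hq.2.1 hq.2.2]
          simp only [K3DiamondI]; split_ifs <;> omega
      · push_neg at hp
        rw [hPout p hp.1 hp.2.1 hp.2.2 q]
        simp only [K3DiamondI]; split_ifs <;> omega
    · right; right
      funext p q
      by_cases hp : p = 0 ∨ p = 1 ∨ p = 2
      · by_cases hq : q = 0 ∨ q = 1 ∨ q = 2
        · rcases hp with rfl | rfl | rfl <;> rcases hq with rfl | rfl | rfl <;>
            simp only [K3DiamondII] <;> norm_num <;> omega
        · push_neg at hq
          rw [hQout p q hq.1 hq.2.1 hq.2.2]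
          simp only [K3DiamondII]; split_ifs <;> omega
      · push_neg at hp
        rw [hPout p hp.1 hp.2.1 hp.2.2 q]
        simp only [K3DiamondII]; split_ifs <;> omega
  · rintro (rfl | rfl | rfl)
    · exact k3_adm0 m
    · exact k3_admI m hm
    · exact k3_admII m hm
  · intro he
    have := congrFun (congrFun he 0) 2
    simp [K3Diamond0, K3DiamondI] at this
  · intro he
    have := congrFun (congrFun he 0) 2
    simp [K3Diamond0, K3DiamondII] at this
  · intro he
    have := congrFun (congrFun he 0) 1
    simp [K3DiamondI, K3DiamondII] at this
end

section
/- Fix an integer m ≥ 4. There are exactly 6 admissible Hodge diamonds for weight n = 2 and Hodge numbers h^{2,0} = h^{0,2} = 2, h^{1,1} = m. Explicitly, each is determined by its restriction to the column p = 0, and the six possibilities for (f(0,0), f(0,1), f(0,2)) are (0,0,2), (0,1,1), (1,0,1), (0,2,0), (1,1,0), (2,0,0), with f(1,0) = f(1,2) = f(2,1) = f(0,1), f(2,0) = f(0,2), f(2,2) = f(0,0), f(1,1) = m − 2·f(0,1), and f(p,q) = 0 for p or q outside {0,1,2}. -/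
/-- The weight-two diamond for Hodge numbers `(2,m,2)` determined by its restriction
`(c00, c01, c02) = (f(0,0), f(0,1), f(0,2))` to the column `p = 0`:
`f(1,0) = f(1,2) = f(2,1) = f(0,1)`, `f(2,0) = f(0,2)`, `f(2,2) = f(0,0)`,
`f(1,1) = m − 2·f(0,1)`, and `f(p,q) = 0` for `p` or `q` outside `{0,1,2}`. -/
def HorikawaDiamond (m c00 c01 c02 : ℕ) : ℤ → ℤ → ℕ := fun p q =>
  if p = 0 ∧ q = 0 then c00
  else if p = 0 ∧ q = 1 then c01
  else if p = 0 ∧ q = 2 then c02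
  else if p = 1 ∧ q = 0 then c01
  else if p = 1 ∧ q = 1 then m - 2 * c01
  else if p = 1 ∧ q = 2 then c01
  else if p = 2 ∧ q = 0 then c02
  else if p = 2 ∧ q = 1 then c01
  else if p = 2 ∧ q = 2 then c00
  else 0

/-- The six admissible column-`0` triples `(f(0,0), f(0,1), f(0,2))`. -/
def HorikawaTriples : Finset (ℕ × ℕ × ℕ) :=
  {(0, 0, 2), (0, 1, 1), (1, 0, 1), (0, 2, 0), (1, 1, 0), (2, 0, 0)}

lemma hd_out (m a b c : ℕ) (p q : ℤ) (h : (p ≠ 0 ∧ p ≠ 1 ∧ p ≠ 2) ∨ (q ≠ 0 ∧ q ≠ 1 ∧ q ≠ 2)) :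
    HorikawaDiamond m a b c p q = 0 := by
  unfold HorikawaDiamond
  rcases h with ⟨h0, h1, h2⟩ | ⟨h0, h1, h2⟩ <;> simp [h0, h1, h2]

lemma hd_symm (m a b c : ℕ) (p q : ℤ) :
    HorikawaDiamond m a b c p q = HorikawaDiamond m a b c q p := by
  have hp : p = 0 ∨ p = 1 ∨ p = 2 ∨ (p ≠ 0 ∧ p ≠ 1 ∧ p ≠ 2) := by omega
  have hq : q = 0 ∨ q = 1 ∨ q = 2 ∨ (q ≠ 0 ∧ q ≠ 1 ∧ q ≠ 2) := by omega
  rcases hp with rfl | rfl | rfl | hp <;> rcases hq with rfl | rfl | rfl | hq <;>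
    simp_all [HorikawaDiamond, hd_out]

lemma hd_symm2 (m a b c : ℕ) (p q : ℤ) :
    HorikawaDiamond m a b c p q = HorikawaDiamond m a b c (2 - q) (2 - p) := by
  by_cases hp : p ≤ -1 ∨ 3 ≤ p
  · rw [hd_out m a b c p q (Or.inl ⟨by omega, by omega, by omega⟩),
      hd_out m a b c (2 - q) (2 - p) (Or.inr ⟨by omega, by omega, by omega⟩)]
  by_cases hq : q ≤ -1 ∨ 3 ≤ q
  · rw [hd_out m a b c p q (Or.inr ⟨by omega, by omega, by omega⟩),
      hd_out m a b c (2 - q) (2 - p) (Or.inl ⟨by omega, by omega, by omega⟩)]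
  push_neg at hp hq
  obtain ⟨hp1, hp2⟩ := hp
  obtain ⟨hq1, hq2⟩ := hq
  interval_cases p <;> interval_cases q <;> norm_num [HorikawaDiamond]

lemma hd_mono (m a b c : ℕ) (hm : 4 ≤ m) (hs : a + b + c = 2) (p q : ℤ) (h : p + q ≤ 2) :
    HorikawaDiamond m a b c (p - 1) (q - 1) ≤ HorikawaDiamond m a b c p q := by
  by_cases hp : p ≤ -1 ∨ 4 ≤ p
  · rw [hd_out m a b c _ _ (Or.inl ⟨by omega, by omega, by omega⟩)]; exact Nat.zero_le _
  by_cases hq : q ≤ -1 ∨ 4 ≤ q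
  · rw [hd_out m a b c _ _ (Or.inr ⟨by omega, by omega, by omega⟩)]; exact Nat.zero_le _
  push_neg at hp hq
  obtain ⟨hp1, hp2⟩ := hp
  obtain ⟨hq1, hq2⟩ := hq
  interval_cases p <;> interval_cases q <;>
    first | omega | (norm_num [HorikawaDiamond]; omega) | norm_num [HorikawaDiamond]

lemma hd_row (m a b c : ℕ) (hm : 4 ≤ m) (hs : a + b + c = 2) (p : ℤ) :
    ∑ q ∈ ({0,1,2} : Finset ℤ), HorikawaDiamond m a b c p q
      = (if p = 0 ∨ p = 2 then 2 else if p = 1 then m else 0) := by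
  rw [show ({0,1,2} : Finset ℤ) = insert 0 (insert 1 {2}) from rfl,
    Finset.sum_insert (by decide), Finset.sum_insert (by decide), Finset.sum_singleton]
  have hp : p = 0 ∨ p = 1 ∨ p = 2 ∨ (p ≠ 0 ∧ p ≠ 1 ∧ p ≠ 2) := by omega
  rcases hp with rfl | rfl | rfl | hp <;>
    simp_all [HorikawaDiamond] <;> omega

/-- **Classification of admissible Hodge diamonds for weight 2, Hodge numbers `(2,m,2)`,
`m ≥ 4`.**  There are exactly six admissible Hodge diamonds; each is determined by its
restriction to the column `p = 0`, and the six possibilities for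
`(f(0,0), f(0,1), f(0,2))` are `(0,0,2), (0,1,1), (1,0,1), (0,2,0), (1,1,0), (2,0,0)`. -/
theorem stmt11 (m : ℕ) (hm : 4 ≤ m) :
    (∀ f : ℤ → ℤ → ℕ,
        AdmissibleDiamond 2
            (fun p => if p = 0 ∨ p = 2 then 2 else if p = 1 then m else 0) f ↔
          ∃ c ∈ HorikawaTriples, f = HorikawaDiamond m c.1 c.2.1 c.2.2) ∧
    (∀ c ∈ HorikawaTriples, ∀ c' ∈ HorikawaTriples,
        HorikawaDiamond m c.1 c.2.1 c.2.2 = HorikawaDiamond m c'.1 c'.2.1 c'.2.2 →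
          c = c') := by
  constructor
  · intro f
    constructor
    · rintro ⟨ha, hb, hc, hd⟩
      have key : ∀ p q : ℤ, (p < 0 ∨ 2 < p) → f p q = 0 := by
        intro p q hp
        obtain ⟨s, hs1, hs2⟩ := ha p
        have h0 : ∑ q ∈ s, f p q = 0 := by
          rw [hs2]
          show (if p = 0 ∨ p = 2 then 2 else if p = 1 then m else 0) = 0
          split_ifs <;> omega
        by_cases hqs : q ∈ s
        · exact Finset.sum_eq_zero_iff.mp h0 q hqs
        · by_contra hne; exact hqs (hs1 q hne)
      have hz : ∀ p q : ℤ, (p < 0 ∨ 2 < p ∨ q < 0 ∨ 2 < q) → f p q = 0 := by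
        intro p q h
        by_cases hp : p < 0 ∨ 2 < p
        · exact key p q hp
        · rw [hb p q]; exact key q p (by omega)
      have hsum3 : ∀ p : ℤ,
          f p 0 + f p 1 + f p 2 = (if p = 0 ∨ p = 2 then 2 else if p = 1 then m else 0) := by
        intro p
        obtain ⟨s, hs1, hs2⟩ := ha p
        have h1 : ∑ q ∈ s, f p q = ∑ q ∈ s ∪ {0,1,2}, f p q :=
          Finset.sum_subset Finset.subset_union_left
            (fun x _ hx => by by_contra hne; exact hx (hs1 x hne))
        have h2 : ∑ q ∈ ({0,1,2} : Finset ℤ), f p q = ∑ q ∈ s ∪ {0,1,2}, f p q := by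
          refine Finset.sum_subset Finset.subset_union_right (fun x hx hx2 => ?_)
          simp only [Finset.mem_insert, Finset.mem_singleton] at hx2
          exact hz p x (by omega)
        have h3 : ∑ q ∈ ({0,1,2} : Finset ℤ), f p q = f p 0 + f p 1 + f p 2 := by
          rw [show ({0,1,2} : Finset ℤ) = insert 0 (insert 1 {2}) from rfl,
            Finset.sum_insert (by decide), Finset.sum_insert (by decide), Finset.sum_singleton]
          ring
        rw [← h3, h2, ← h1, hs2]
      have e0 := hsum3 0
      have e1 := hsum3 1
      have e2 := hsum3 2
      norm_num at e0 e1 e2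
      have s10 : f 1 0 = f 0 1 := hb 1 0
      have s12 : f 1 2 = f 0 1 := by have := hc 1 2; norm_num at this; exact this
      have s20 : f 2 0 = f 0 2 := hb 2 0
      have s21 : f 2 1 = f 0 1 := by rw [hb 2 1]; exact s12
      have s22 : f 2 2 = f 0 0 := by have := hc 2 2; norm_num at this; exact this
      refine ⟨(f 0 0, f 0 1, f 0 2), ?_, ?_⟩
      · simp only [HorikawaTriples, Finset.mem_insert, Finset.mem_singleton, Prod.mk.injEq]
        omega
      · funext p q
        show f p q = HorikawaDiamond m (f 0 0) (f 0 1) (f 0 2) p q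
        by_cases hp : p < 0 ∨ 2 < p
        · rw [hz p q (by omega), hd_out _ _ _ _ _ _ (Or.inl ⟨by omega, by omega, by omega⟩)]
        by_cases hq : q < 0 ∨ 2 < q
        · rw [hz p q (by omega), hd_out _ _ _ _ _ _ (Or.inr ⟨by omega, by omega, by omega⟩)]
        push_neg at hp hq
        obtain ⟨hp1, hp2⟩ := hp
        obtain ⟨hq1, hq2⟩ := hq
        interval_cases p <;> interval_cases q <;>
          first | (norm_num [HorikawaDiamond]; omega) | norm_num [HorikawaDiamond]
    · rintro ⟨⟨a, b, c⟩, hmem, rfl⟩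
      simp only [HorikawaTriples, Finset.mem_insert, Finset.mem_singleton,
        Prod.mk.injEq] at hmem
      have hs : a + b + c = 2 := by omega
      refine ⟨fun p => ⟨{0,1,2}, fun q hq => ?_, hd_row m a b c hm hs p⟩,
        fun p q => hd_symm m a b c p q, fun p q => hd_symm2 m a b c p q,
        fun p q h => hd_mono m a b c hm hs p q h⟩
      by_contra hq2
      simp only [Finset.mem_insert, Finset.mem_singleton] at hq2
      exact hq (hd_out m a b c p q (Or.inr ⟨by omega, by omega, by omega⟩))
  · intro c hc c' hc' h
    obtain ⟨a, b, c0⟩ := c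
    obtain ⟨a', b', c0'⟩ := c'
    have h0 := congrFun (congrFun h 0) 0
    have h1 := congrFun (congrFun h 0) 1
    have h2 := congrFun (congrFun h 0) 2
    norm_num [HorikawaDiamond] at h0 h1 h2
    subst h0; subst h1; subst h2; rfl
end
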